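/- The 3-uniform hypergraph 35-35c (35 vertices, 35 edges, listed in the context) admits exactly one state, namely the constant function assigning 1/3 to every vertex. -/
import Mathlib


/-- A state on a 3-uniform hypergraph with vertex set `Fin n` and edge list `E`:
a function `m` with `0 ≤ m v ≤ 1` for every vertex and whose values sum to `1`
over every edge. -/
def IsHypergraphState {n : ℕ} (E : List (Fin n × Fin n × Fin n)) (m : Fin n → ℝ) : Prop :=
  (∀ v, 0 ≤ m v ∧ m v ≤ 1) ∧ ∀ e ∈ E, m e.1 + m e.2.1 + m e.2.2 = 1

def edges3535c : List (Fin 35 × Fin 35 × Fin 35) :=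
  [(33, 32, 34), (34, 14, 16), (16, 17, 21), (21, 20, 22), (22, 19, 18),
   (18, 3, 27), (27, 10, 2), (2, 24, 8), (8, 0, 29), (29, 30, 31),
   (31, 28, 25), (25, 9, 15), (15, 11, 13), (13, 5, 6), (6, 23, 1),
   (1, 7, 33), (26, 27, 28), (23, 24, 25), (14, 15, 19), (12, 13, 17),
   (9, 10, 21), (7, 8, 19), (4, 20, 24), (3, 16, 23), (4, 14, 26),
   (4, 12, 30), (3, 11, 29), (0, 6, 26), (1, 10, 30), (7, 17, 28),
   (5, 22, 31), (11, 20, 33), (12, 18, 32), (0, 9, 32), (2, 5, 34)]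

/-- The hypergraph 35-35c admits exactly one state, namely the constant
function assigning `1/3` to every vertex. -/
theorem edges3535c_unique_state :
    ∀ m : Fin 35 → ℝ, IsHypergraphState edges3535c m ↔ ∀ v, m v = 1/3 := by
  intro m
  constructor
  · rintro ⟨h1, h2⟩
    simp only [edges3535c, List.forall_mem_cons, List.forall_mem_nil] at h2
    obtain ⟨e0,e1,e2,e3,e4,e5,e6,e7,e8,e9,e10,e11,e12,e13,e14,e15,e16,e17,e18,e19,e20,e21,e22,e23,e24,e25,e26,e27,e28,e29,e30,e31,e32,e33,e34,-⟩ := h2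
    have g0 : m 0 = 1/3 := by linear_combination (-1/6)*e0 + (1/6)*e5 + (-1/6)*e7 + (1/3)*e8 + (-1/6)*e9 + (1/6)*e10 + (-1/3)*e11 + (1/6)*e12 + (-1/6)*e13 + (-1/6)*e14 + (1/6)*e15 + (-1/6)*e16 + (1/6)*e17 + (1/6)*e18 + (-1/6)*e21 + (-1/6)*e24 + (1/6)*e25 + (-1/6)*e26 + (1/3)*e27 + (-1/6)*e32 + (1/3)*e33 + (1/6)*e34
    have g1 : m 1 = 1/3 := by linear_combination (-1/6)*e0 + (1/6)*e2 + (-1/6)*e6 + (-1/6)*e9 + (1/6)*e10 + (-1/6)*e13 + (1/3)*e14 + (1/3)*e15 + (1/6)*e16 + (-1/6)*e17 + (1/6)*e19 + (-1/6)*e20 + (1/6)*e22 + (-1/6)*e23 + (-1/6)*e25 + (1/6)*e26 + (-1/6)*e27 + (1/3)*e28 + (-1/3)*e29 + (-1/6)*e31 + (1/6)*e33 + (1/6)*e34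
    have g2 : m 2 = 1/3 := by linear_combination (-1/6)*e0 + (-1/6)*e1 + (1/6)*e3 + (1/6)*e4 + (-1/6)*e5 + (1/3)*e6 + (1/3)*e7 + (-1/6)*e8 + (1/6)*e9 + (1/6)*e10 + (1/6)*e15 + (-1/6)*e16 + (-1/6)*e17 + (-1/6)*e20 + (-1/6)*e21 + (-1/6)*e22 + (1/6)*e23 + (1/6)*e24 + (-1/6)*e28 + (-1/3)*e30 + (1/6)*e33 + (1/3)*e34
    have g3 : m 3 = 1/3 := by linear_combination (1/6)*e0 + (-1/6)*e1 + (-1/6)*e2 + (1/6)*e3 + (-1/6)*e4 + (1/3)*e5 + (-1/6)*e6 + (1/6)*e7 + (-1/6)*e8 + (-1/6)*e9 + (1/6)*e10 + (-1/6)*e12 + (-1/6)*e14 + (-1/6)*e16 + (-1/6)*e17 + (1/6)*e18 + (1/6)*e19 + (1/3)*e23 + (1/3)*e26 + (1/6)*e27 + (1/6)*e28 + (-1/6)*e31 + (-1/6)*e32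
    have g4 : m 4 = 1/3 := by linear_combination (1/6)*e0 + (-1/6)*e1 + (1/6)*e2 + (-1/6)*e3 + (1/6)*e4 + (1/6)*e6 + (-1/6)*e7 + (1/6)*e8 + (-1/6)*e9 + (1/6)*e10 + (1/6)*e12 + (1/6)*e14 + (-1/6)*e16 + (-1/6)*e17 + (-1/6)*e18 + (-1/6)*e19 + (1/3)*e22 + (1/3)*e24 + (1/3)*e25 + (-1/6)*e27 + (-1/6)*e28 + (-1/6)*e31 + (-1/6)*e32
    have g5 : m 5 = 1/3 := by linear_combination (-1/6)*e0 + (-1/6)*e1 + (1/6)*e2 + (-1/6)*e3 + (-1/6)*e4 + (-1/6)*e6 + (-1/6)*e7 + (1/6)*e8 + (-1/6)*e9 + (-1/6)*e10 + (-1/6)*e12 + (1/3)*e13 + (-1/6)*e14 + (1/6)*e16 + (1/6)*e17 + (1/6)*e18 + (-1/6)*e19 + (-1/6)*e27 + (1/6)*e28 + (1/3)*e30 + (1/6)*e31 + (1/6)*e32 + (1/3)*e34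
    have g6 : m 6 = 1/3 := by linear_combination (1/6)*e0 + (1/6)*e1 + (1/6)*e6 + (1/6)*e7 + (-1/6)*e8 + (1/6)*e11 + (-1/6)*e12 + (1/3)*e13 + (1/3)*e14 + (-1/6)*e15 + (-1/6)*e16 + (-1/6)*e17 + (-1/6)*e19 + (-1/6)*e23 + (-1/6)*e24 + (1/6)*e25 + (1/6)*e26 + (1/3)*e27 + (-1/6)*e28 + (1/6)*e29 + (-1/6)*e33 + (-1/3)*e34
    have g7 : m 7 = 1/3 := by linear_combination (-1/6)*e0 + (1/6)*e1 + (-1/6)*e2 + (1/6)*e3 + (-1/6)*e4 + (1/6)*e6 + (-1/6)*e7 + (-1/6)*e8 + (1/6)*e9 + (-1/6)*e10 + (1/6)*e12 + (-1/6)*e14 + (1/3)*e15 + (-1/6)*e16 + (1/6)*e17 + (-1/6)*e18 + (-1/6)*e19 + (1/3)*e21 + (1/6)*e27 + (-1/6)*e28 + (1/3)*e29 + (-1/6)*e31 + (1/6)*e32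
    have g8 : m 8 = 1/3 := by linear_combination (1/6)*e0 + (-1/6)*e4 + (1/6)*e5 + (-1/6)*e6 + (1/3)*e7 + (1/3)*e8 + (-1/6)*e9 + (1/6)*e11 + (1/6)*e14 + (-1/3)*e15 + (-1/6)*e17 + (-1/6)*e18 + (1/3)*e21 + (-1/6)*e22 + (1/6)*e24 + (-1/6)*e26 + (-1/6)*e27 + (1/6)*e28 + (1/6)*e30 + (1/6)*e31 + (-1/6)*e33 + (-1/6)*e34
    have g9 : m 9 = 1/3 := by linear_combination (-1/6)*e0 + (1/6)*e1 + (-1/6)*e2 + (-1/6)*e3 + (1/6)*e4 + (-1/6)*e6 + (1/6)*e7 + (-1/6)*e8 + (1/6)*e9 + (-1/6)*e10 + (1/3)*e11 + (-1/6)*e12 + (1/6)*e14 + (1/6)*e16 + (-1/6)*e17 + (-1/6)*e18 + (1/6)*e19 + (1/3)*e20 + (-1/6)*e27 + (-1/6)*e28 + (1/6)*e31 + (-1/6)*e32 + (1/3)*e33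
    have g10 : m 10 = 1/3 := by linear_combination (1/6)*e0 + (-1/6)*e2 + (-1/6)*e3 + (-1/6)*e5 + (1/3)*e6 + (-1/6)*e7 + (1/6)*e8 + (-1/6)*e9 + (-1/6)*e14 + (-1/6)*e15 + (-1/6)*e16 + (1/3)*e20 + (1/6)*e22 + (1/6)*e23 + (-1/6)*e25 + (1/6)*e27 + (1/3)*e28 + (1/6)*e29 + (1/6)*e30 + (1/6)*e32 + (-1/3)*e33 + (-1/6)*e34
    have g11 : m 11 = 1/3 := by linear_combination (-1/6)*e0 + (1/6)*e1 + (1/6)*e2 + (-1/6)*e3 + (-1/6)*e8 + (-1/6)*e9 + (-1/6)*e11 + (1/3)*e12 + (-1/6)*e13 + (1/6)*e14 + (-1/6)*e15 + (1/6)*e17 + (-1/6)*e18 + (-1/6)*e19 + (1/6)*e21 + (-1/6)*e22 + (-1/3)*e23 + (1/6)*e25 + (1/3)*e26 + (1/6)*e30 + (1/3)*e31 + (1/6)*e33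
    have g12 : m 12 = 1/3 := by linear_combination (-1/6)*e0 + (1/6)*e1 + (-1/6)*e2 + (-1/6)*e4 + (-1/6)*e5 + (-1/6)*e9 + (-1/6)*e12 + (-1/6)*e13 + (1/6)*e15 + (1/6)*e16 + (1/6)*e18 + (1/3)*e19 + (1/6)*e20 + (-1/3)*e24 + (1/3)*e25 + (1/6)*e26 + (1/6)*e27 + (-1/6)*e28 + (-1/6)*e29 + (1/6)*e30 + (1/3)*e32 + (-1/6)*e33
    have g13 : m 13 = 1/3 := by linear_combination (-1/6)*e2 + (1/6)*e3 + (1/6)*e4 + (1/6)*e9 + (1/6)*e10 + (-1/6)*e11 + (1/3)*e12 + (1/3)*e13 + (-1/6)*e14 + (1/6)*e15 + (-1/6)*e18 + (1/3)*e19 + (1/6)*e23 + (1/6)*e24 + (-1/6)*e25 + (-1/6)*e26 + (-1/6)*e27 + (-1/6)*e29 + (-1/3)*e30 + (-1/6)*e31 + (-1/6)*e32 + (1/6)*e33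
    have g14 : m 14 = 1/3 := by linear_combination (-1/6)*e0 + (1/3)*e1 + (-1/6)*e2 + (1/6)*e3 + (-1/6)*e4 + (1/6)*e5 + (1/6)*e7 + (-1/6)*e11 + (-1/6)*e12 + (1/6)*e13 + (-1/6)*e16 + (1/6)*e17 + (1/3)*e18 + (-1/6)*e21 + (-1/3)*e22 + (-1/6)*e23 + (1/3)*e24 + (-1/6)*e27 + (1/6)*e29 + (1/6)*e31 + (1/6)*e33 + (-1/6)*e34
    have g15 : m 15 = 1/3 := by linear_combination (1/6)*e0 + (-1/6)*e1 + (-1/6)*e4 + (1/6)*e8 + (-1/6)*e10 + (1/3)*e11 + (1/3)*e12 + (-1/6)*e13 + (-1/6)*e17 + (1/3)*e18 + (-1/6)*e19 + (-1/6)*e21 + (1/6)*e22 + (1/6)*e23 + (-1/6)*e24 + (-1/6)*e26 + (1/6)*e27 + (1/6)*e29 + (1/6)*e30 + (-1/6)*e31 + (1/6)*e32 + (-1/3)*e33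
    have g16 : m 16 = 1/3 := by linear_combination (-1/6)*e0 + (1/3)*e1 + (1/3)*e2 + (-1/6)*e3 + (1/6)*e4 + (-1/3)*e5 + (1/6)*e6 + (1/6)*e11 + (1/6)*e13 + (-1/6)*e14 + (1/6)*e15 + (1/6)*e16 + (-1/6)*e17 + (-1/6)*e18 + (-1/6)*e19 + (-1/6)*e20 + (1/6)*e22 + (1/3)*e23 + (-1/6)*e24 + (-1/6)*e29 + (1/6)*e32 + (-1/6)*e34
    have g17 : m 17 = 1/3 := by linear_combination (1/6)*e0 + (-1/6)*e1 + (1/3)*e2 + (-1/6)*e3 + (1/6)*e5 + (-1/6)*e10 + (1/6)*e11 + (-1/6)*e12 + (-1/6)*e13 + (1/6)*e14 + (-1/3)*e15 + (-1/6)*e16 + (1/3)*e19 + (-1/6)*e20 + (-1/6)*e23 + (1/6)*e24 + (-1/6)*e25 + (1/6)*e28 + (1/3)*e29 + (1/6)*e30 + (1/6)*e31 + (-1/6)*e32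
    have g18 : m 18 = 1/3 := by linear_combination (-1/6)*e0 + (-1/6)*e3 + (1/3)*e4 + (1/3)*e5 + (-1/6)*e6 + (1/6)*e8 + (1/6)*e9 + (1/6)*e12 + (-1/6)*e16 + (-1/6)*e18 + (-1/6)*e19 + (1/6)*e20 + (-1/6)*e21 + (1/6)*e24 + (-1/6)*e25 + (-1/3)*e26 + (1/6)*e29 + (-1/6)*e30 + (1/6)*e31 + (1/3)*e32 + (-1/6)*e33 + (1/6)*e34
    have g19 : m 19 = 1/3 := by linear_combination (-1/6)*e1 + (1/6)*e2 + (-1/6)*e3 + (1/3)*e4 + (-1/6)*e5 + (-1/6)*e7 + (-1/6)*e8 + (1/6)*e10 + (-1/6)*e11 + (-1/6)*e12 + (1/6)*e16 + (1/3)*e18 + (1/6)*e19 + (1/3)*e21 + (1/6)*e22 + (-1/6)*e24 + (1/6)*e26 + (-1/3)*e29 + (-1/6)*e30 + (-1/6)*e32 + (1/6)*e33 + (1/6)*e34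
    have g20 : m 20 = 1/3 := by linear_combination (-1/6)*e0 + (-1/6)*e2 + (1/3)*e3 + (-1/6)*e4 + (-1/6)*e7 + (1/6)*e9 + (1/6)*e11 + (-1/6)*e12 + (-1/6)*e15 + (-1/6)*e17 + (1/6)*e19 + (-1/6)*e20 + (1/6)*e21 + (1/3)*e22 + (1/6)*e23 + (-1/3)*e25 + (-1/6)*e26 + (1/6)*e28 + (-1/6)*e30 + (1/3)*e31 + (1/6)*e32 + (1/6)*e34
    have g21 : m 21 = 1/3 := by linear_combination (-1/6)*e1 + (1/3)*e2 + (1/3)*e3 + (-1/6)*e4 + (1/6)*e5 + (-1/6)*e6 + (1/6)*e10 + (-1/3)*e11 + (1/6)*e12 + (1/6)*e15 + (1/6)*e17 + (1/6)*e18 + (-1/6)*e19 + (1/3)*e20 + (-1/6)*e22 + (-1/6)*e23 + (1/6)*e25 + (-1/6)*e28 + (-1/6)*e29 + (-1/6)*e30 + (-1/6)*e31 + (1/6)*e34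
    have g22 : m 22 = 1/3 := by linear_combination (1/6)*e0 + (1/6)*e1 + (-1/6)*e2 + (1/3)*e3 + (1/3)*e4 + (-1/6)*e5 + (1/6)*e6 + (1/6)*e7 + (-1/6)*e9 + (-1/6)*e10 + (1/6)*e11 + (-1/6)*e18 + (-1/6)*e20 + (-1/6)*e21 + (-1/6)*e22 + (1/6)*e25 + (1/6)*e26 + (1/6)*e29 + (1/3)*e30 + (-1/6)*e31 + (-1/6)*e32 + (-1/3)*e34
    have g23 : m 23 = 1/3 := by linear_combination (-1/6)*e1 + (-1/6)*e2 + (-1/6)*e7 + (1/6)*e8 + (1/6)*e9 + (-1/6)*e10 + (-1/6)*e11 + (1/6)*e12 + (-1/6)*e13 + (1/3)*e14 + (-1/6)*e15 + (1/3)*e17 + (1/6)*e20 + (-1/6)*e22 + (1/3)*e23 + (1/6)*e24 + (-1/3)*e26 + (-1/6)*e27 + (-1/6)*e28 + (1/6)*e29 + (1/6)*e31 + (1/6)*e34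
    have g24 : m 24 = 1/3 := by linear_combination (1/6)*e1 + (-1/6)*e3 + (-1/6)*e6 + (1/3)*e7 + (-1/6)*e8 + (-1/6)*e10 + (-1/6)*e11 + (-1/6)*e14 + (1/6)*e15 + (1/6)*e16 + (1/3)*e17 + (1/6)*e18 + (1/6)*e20 + (-1/6)*e21 + (1/3)*e22 + (-1/6)*e23 + (-1/3)*e24 + (1/6)*e26 + (1/6)*e27 + (1/6)*e30 + (-1/6)*e31 + (-1/6)*e34
    have g25 : m 25 = 1/3 := by linear_combination (1/6)*e2 + (1/6)*e3 + (1/6)*e6 + (-1/6)*e7 + (-1/6)*e9 + (1/3)*e10 + (1/3)*e11 + (-1/6)*e12 + (1/6)*e13 + (-1/6)*e14 + (-1/6)*e16 + (1/3)*e17 + (-1/6)*e18 + (-1/3)*e20 + (1/6)*e21 + (-1/6)*e22 + (-1/6)*e23 + (1/6)*e24 + (1/6)*e26 + (1/6)*e28 + (-1/6)*e29 + (-1/6)*e30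
    have g26 : m 26 = 1/3 := by linear_combination (-1/6)*e1 + (-1/6)*e5 + (-1/6)*e6 + (-1/6)*e8 + (1/6)*e9 + (-1/6)*e10 + (1/6)*e11 + (-1/6)*e13 + (-1/6)*e14 + (1/3)*e16 + (-1/6)*e18 + (1/6)*e19 + (1/6)*e21 + (1/6)*e23 + (1/3)*e24 + (-1/3)*e25 + (1/3)*e27 + (1/6)*e28 + (-1/6)*e29 + (1/6)*e32 + (-1/6)*e33 + (1/6)*e34
    have g27 : m 27 = 1/3 := by linear_combination (1/6)*e1 + (1/6)*e2 + (-1/6)*e4 + (1/3)*e5 + (1/3)*e6 + (-1/6)*e7 + (-1/6)*e10 + (1/6)*e14 + (1/3)*e16 + (1/6)*e17 + (-1/6)*e20 + (1/6)*e21 + (-1/3)*e23 + (-1/6)*e24 + (1/6)*e25 + (-1/6)*e27 + (-1/6)*e28 + (-1/6)*e29 + (1/6)*e30 + (-1/6)*e32 + (1/6)*e33 + (-1/6)*e34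
    have g28 : m 28 = 1/3 := by linear_combination (-1/6)*e2 + (1/6)*e4 + (-1/6)*e5 + (-1/6)*e6 + (1/6)*e7 + (1/6)*e8 + (-1/6)*e9 + (1/3)*e10 + (-1/6)*e11 + (1/6)*e13 + (1/3)*e16 + (-1/6)*e17 + (1/6)*e18 + (-1/6)*e19 + (1/6)*e20 + (-1/3)*e21 + (1/6)*e23 + (-1/6)*e24 + (1/6)*e25 + (-1/6)*e27 + (1/3)*e29 + (-1/6)*e30
    have g29 : m 29 = 1/3 := by linear_combination (1/6)*e4 + (-1/3)*e5 + (1/6)*e6 + (-1/6)*e7 + (1/3)*e8 + (1/3)*e9 + (-1/6)*e10 + (1/6)*e11 + (-1/6)*e12 + (1/6)*e13 + (1/6)*e15 + (1/6)*e16 + (-1/6)*e21 + (1/6)*e22 + (-1/6)*e25 + (1/3)*e26 + (-1/6)*e27 + (-1/6)*e28 + (-1/6)*e30 + (-1/6)*e31 + (1/6)*e32 + (-1/6)*e33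
    have g30 : m 30 = 1/3 := by linear_combination (1/6)*e3 + (1/6)*e5 + (-1/6)*e6 + (1/6)*e7 + (-1/6)*e8 + (1/3)*e9 + (-1/6)*e10 + (1/6)*e13 + (-1/6)*e14 + (-1/6)*e15 + (1/6)*e17 + (-1/6)*e19 + (-1/6)*e20 + (-1/3)*e22 + (1/3)*e25 + (-1/6)*e26 + (1/3)*e28 + (1/6)*e29 + (-1/6)*e30 + (1/6)*e31 + (-1/6)*e32 + (1/6)*e33
    have g31 : m 31 = 1/3 := by linear_combination (-1/6)*e3 + (-1/6)*e4 + (1/6)*e5 + (-1/6)*e8 + (1/3)*e9 + (1/3)*e10 + (-1/6)*e11 + (1/6)*e12 + (-1/3)*e13 + (1/6)*e14 + (-1/6)*e16 + (-1/6)*e17 + (1/6)*e19 + (1/6)*e20 + (1/6)*e21 + (1/6)*e22 + (-1/6)*e25 + (-1/6)*e26 + (1/6)*e27 + (-1/6)*e28 + (-1/6)*e29 + (1/3)*e30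
    have g32 : m 32 = 1/3 := by linear_combination (1/3)*e0 + (-1/6)*e1 + (1/6)*e2 + (1/6)*e3 + (-1/6)*e4 + (-1/6)*e5 + (1/6)*e6 + (-1/6)*e8 + (1/6)*e13 + (-1/6)*e15 + (-1/6)*e19 + (-1/3)*e20 + (1/6)*e21 + (1/6)*e24 + (-1/6)*e25 + (1/6)*e26 + (-1/6)*e27 + (1/6)*e28 + (-1/6)*e31 + (1/3)*e32 + (1/3)*e33 + (-1/6)*e34
    have g33 : m 33 = 1/3 := by linear_combination (1/3)*e0 + (-1/6)*e1 + (-1/6)*e3 + (1/6)*e4 + (1/6)*e7 + (1/6)*e8 + (-1/6)*e12 + (1/6)*e13 + (-1/6)*e14 + (1/3)*e15 + (1/6)*e18 + (1/6)*e20 + (-1/3)*e21 + (-1/6)*e22 + (1/6)*e23 + (1/6)*e25 + (-1/6)*e26 + (-1/6)*e28 + (1/3)*e31 + (-1/6)*e32 + (-1/6)*e33 + (-1/6)*e34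
    have g34 : m 34 = 1/3 := by linear_combination (1/3)*e0 + (1/3)*e1 + (-1/6)*e2 + (1/6)*e5 + (-1/6)*e6 + (-1/6)*e7 + (1/6)*e12 + (-1/3)*e13 + (1/6)*e14 + (-1/6)*e15 + (-1/6)*e18 + (1/6)*e19 + (1/6)*e20 + (1/6)*e21 + (1/6)*e22 + (-1/6)*e23 + (-1/6)*e24 + (1/6)*e27 + (-1/6)*e31 + (-1/6)*e32 + (-1/6)*e33 + (1/3)*e34
    intro v
    fin_cases v
    · exact g0
    · exact g1
    · exact g2
    · exact g3
    · exact g4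
    · exact g5
    · exact g6
    · exact g7
    · exact g8
    · exact g9
    · exact g10
    · exact g11
    · exact g12
    · exact g13
    · exact g14
    · exact g15
    · exact g16
    · exact g17
    · exact g18
    · exact g19
    · exact g20
    · exact g21
    · exact g22
    · exact g23
    · exact g24
    · exact g25
    · exact g26
    · exact g27
    · exact g28
    · exact g29
    · exact g30
    · exact g31
    · exact g32
    · exact g33
    · exact g34
  · intro h
    refine ⟨fun v => ⟨by rw [h]; norm_num, by rw [h]; norm_num⟩, fun e he => ?_⟩
    fin_cases he <;> (rw [show (1:ℝ) = 1/3+1/3+1/3 by norm_num]; exact by rw [h,h,h])
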